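/- Let p > 2, p' = p/(p-1), and v_p(x) := (p'-1) sin_{p'}(π_{p'} x)^{p'-2} cos_{p'}(π_{p'} x) for x ∈ (0, 1/2]. Then v_p is strictly decreasing on (0, 1/2], lim_{x→0⁺} x·v_p(x) = 0, lim_{x→0⁺} v_p(x) = +∞, and v_p(1/2) = 0. -/

import Mathlib

/-!
Write `q = p / (p - 1) ∈ (1, 2)` and `s = sin_q (π_q x)`. Differentiating `F_q (sin_q y) = y`
gives `cos_q = (1 - sin_q ^ q) ^ (1 / q)` on `(0, π_q / 2)`, and at `π_q / 2` the derivative is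
the limit `0` of `cos_q`. Hence on `(0, 1/2]`, `v x = φ s` with
`φ s = (q - 1) s ^ (q - 2) (1 - s ^ q) ^ (1 / q)` (`vProfile` below). Since `q ≤ 2`, `φ` is
strictly decreasing on `(0, 1]`; it vanishes at `1` and, since `q < 2`, blows up at `0⁺`, while `s`
increases from `0⁺` to `1`. Finally `π_q x = F_q s ≤ s / cos_q s` because the integrand of `F_q`
is increasing, so `π_q x v x ≤ (q - 1) s ^ (q - 1) → 0`.
-/

open Real Set Filter

noncomputable def Fp (p y : ℝ) : ℝ := ∫ t in (0:ℝ)..y, (1 - t ^ p) ^ (-(1/p))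

noncomputable def pip (p : ℝ) : ℝ := 2 * Fp p 1

open MeasureTheory intervalIntegral Topology

noncomputable def fpIntegrand (q t : ℝ) : ℝ := (1 - t ^ q) ^ (-(1 / q))

section Integrand

variable {q : ℝ}

theorem one_sub_rpow_pos (hq : 0 < q) {t : ℝ} (ht₀ : 0 ≤ t) (ht₁ : t < 1) : 0 < 1 - t ^ q :=
  sub_pos.2 (rpow_lt_one ht₀ ht₁ hq)

theorem fpIntegrand_pos (hq : 0 < q) {t : ℝ} (ht₀ : 0 ≤ t) (ht₁ : t < 1) :
    0 < fpIntegrand q t :=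
  rpow_pos_of_pos (one_sub_rpow_pos hq ht₀ ht₁) _

theorem inv_fpIntegrand {t : ℝ} (ht : t ^ q ≤ 1) :
    (fpIntegrand q t)⁻¹ = (1 - t ^ q) ^ (1 / q) := by
  rw [fpIntegrand, rpow_neg (sub_nonneg.2 ht), inv_inv]

theorem fpIntegrand_monotoneOn (hq : 0 < q) : MonotoneOn (fpIntegrand q) (Ico 0 1) :=
  fun s hs t ht hst => rpow_le_rpow_of_nonpos (one_sub_rpow_pos hq ht.1 ht.2)
    (sub_le_sub_left (rpow_le_rpow hs.1 hst hq.le) 1) (neg_nonpos.2 (by positivity))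

theorem continuousAt_fpIntegrand (hq : 0 < q) {t : ℝ} (ht₀ : 0 ≤ t) (ht₁ : t < 1) :
    ContinuousAt (fpIntegrand q) t :=
  (continuousAt_const.sub (continuousAt_rpow_const t q (Or.inr hq.le))).rpow_const
    (Or.inl (one_sub_rpow_pos hq ht₀ ht₁).ne')

theorem continuousOn_fpIntegrand (hq : 0 < q) : ContinuousOn (fpIntegrand q) (Ioo 0 1) :=
  fun _ ht => (continuousAt_fpIntegrand hq ht.1.le ht.2).continuousWithinAt

/-- On `[0, 1]`, `1 - t ^ q ≥ 1 - t`, so the integrand is dominated by `(1 - t) ^ (-1/q)`,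
which is integrable exactly because `q > 1`. -/
theorem intervalIntegrable_fpIntegrand (hq : 1 < q) {a b : ℝ} (ha : a ∈ Icc (0:ℝ) 1)
    (hb : b ∈ Icc (0:ℝ) 1) : IntervalIntegrable (fpIntegrand q) volume a b := by
  have hq₀ : 0 < q := by linarith
  refine IntervalIntegrable.mono_set (a := 0) (b := 1) ?_
    (by rw [uIcc_subset_uIcc_iff_mem, uIcc_of_le zero_le_one]; exact ⟨ha, hb⟩)
  have hdom : IntervalIntegrable (fun t : ℝ => (1 - t) ^ (-(1 / q))) volume 0 1 := by
    have hexp : (-1:ℝ) < -(1 / q) := by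
      have : 1 / q < 1 := (div_lt_one hq₀).2 hq
      linarith
    simpa using ((intervalIntegrable_rpow' (a := 0) (b := 1) hexp).comp_sub_left 1).symm
  refine hdom.mono_fun' ?_ ?_ <;>
    rw [uIoc_of_le zero_le_one, ← Measure.restrict_congr_set Ioo_ae_eq_Ioc]
  · exact (continuousOn_fpIntegrand hq₀).aestronglyMeasurable measurableSet_Ioo
  · refine ae_restrict_of_forall_mem measurableSet_Ioo fun t ht => ?_
    show ‖fpIntegrand q t‖ ≤ (1 - t) ^ (-(1 / q))
    rw [norm_of_nonneg (fpIntegrand_pos hq₀ ht.1.le ht.2).le]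
    refine rpow_le_rpow_of_nonpos (sub_pos.2 ht.2) ?_ (neg_nonpos.2 (by positivity))
    have : t ^ q ≤ t := by simpa using rpow_le_rpow_of_exponent_ge ht.1 ht.2.le hq.le
    linarith

end Integrand

section Fp

variable {q : ℝ}

theorem Fp_eq_integral (q y : ℝ) : Fp q y = ∫ t in (0:ℝ)..y, fpIntegrand q t := rfl

theorem Fp_zero (q : ℝ) : Fp q 0 = 0 := integral_same

theorem Fp_strictMonoOn (hq : 1 < q) : StrictMonoOn (Fp q) (Icc 0 1) := by
  intro a ha b hb hab
  have hpos : 0 < ∫ t in a..b, fpIntegrand q t :=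
    intervalIntegral_pos_of_pos_on (intervalIntegrable_fpIntegrand hq ha hb)
      (fun t ht => fpIntegrand_pos (by linarith) (ha.1.trans ht.1.le) (ht.2.trans_le hb.2)) hab
  rw [Fp_eq_integral, Fp_eq_integral, ← integral_add_adjacent_intervals
    (intervalIntegrable_fpIntegrand hq (left_mem_Icc.2 zero_le_one) ha)
    (intervalIntegrable_fpIntegrand hq ha hb)]
  linarith

theorem Fp_continuousOn (hq : 1 < q) : ContinuousOn (Fp q) (Icc 0 1) := by
  have h := continuousOn_primitive_interval' (intervalIntegrable_fpIntegrand hq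
    (left_mem_Icc.2 zero_le_one) (right_mem_Icc.2 zero_le_one)) left_mem_uIcc
  rwa [uIcc_of_le zero_le_one] at h

theorem hasDerivAt_Fp (hq : 1 < q) {y : ℝ} (hy : y ∈ Ioo (0:ℝ) 1) :
    HasDerivAt (Fp q) (fpIntegrand q y) y :=
  integral_hasDerivAt_right
    (intervalIntegrable_fpIntegrand hq (left_mem_Icc.2 zero_le_one) (Ioo_subset_Icc_self hy))
    ((continuousOn_fpIntegrand (by linarith)).stronglyMeasurableAtFilter isOpen_Ioo y hy)
    (continuousAt_fpIntegrand (by linarith) hy.1.le hy.2)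

theorem Fp_le_mul_fpIntegrand (hq : 1 < q) {s : ℝ} (hs₀ : 0 ≤ s) (hs₁ : s < 1) :
    Fp q s ≤ s * fpIntegrand q s :=
  calc Fp q s ≤ ∫ _ in (0:ℝ)..s, fpIntegrand q s :=
        integral_mono_on hs₀ (intervalIntegrable_fpIntegrand hq (left_mem_Icc.2 zero_le_one)
          ⟨hs₀, hs₁.le⟩) intervalIntegrable_const fun t ht =>
          fpIntegrand_monotoneOn (by linarith) ⟨ht.1, ht.2.trans_lt hs₁⟩ ⟨hs₀, hs₁⟩ ht.2
    _ = s * fpIntegrand q s := by simp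

end Fp

section LeftInverse

variable {F g : ℝ → ℝ} {a b : ℝ}

theorem image_Icc_of_leftInvOn (hab : a ≤ b) (hF : ContinuousOn F (Icc a b))
    (hFm : MonotoneOn F (Icc a b)) (hg : LeftInvOn g F (Icc a b)) :
    g '' Icc (F a) (F b) = Icc a b := by
  rw [← hF.image_Icc_of_monotoneOn hab hFm, hg.image_image]

theorem strictMonoOn_of_leftInvOn (hab : a ≤ b) (hF : ContinuousOn F (Icc a b))
    (hFm : StrictMonoOn F (Icc a b)) (hg : LeftInvOn g F (Icc a b)) :
    StrictMonoOn g (Icc (F a) (F b)) := by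
  rw [← hF.image_Icc_of_monotoneOn hab hFm.monotoneOn]
  rintro _ ⟨x, hx, rfl⟩ _ ⟨y, hy, rfl⟩ hxy
  rw [hg hx, hg hy]
  exact (hFm.lt_iff_lt hx hy).1 hxy

theorem mapsTo_Ioo_of_leftInvOn (hab : a ≤ b) (hF : ContinuousOn F (Icc a b))
    (hFm : StrictMonoOn F (Icc a b)) (hg : LeftInvOn g F (Icc a b)) :
    MapsTo g (Ioo (F a) (F b)) (Ioo a b) := fun x hx => by
  have hg' := strictMonoOn_of_leftInvOn hab hF hFm hg
  have hx' := Ioo_subset_Icc_self hx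
  constructor
  · simpa only [hg (left_mem_Icc.2 hab)] using
      hg' (left_mem_Icc.2 (hx.1.trans hx.2).le) hx' hx.1
  · simpa only [hg (right_mem_Icc.2 hab)] using
      hg' hx' (right_mem_Icc.2 (hx.1.trans hx.2).le) hx.2

theorem mapsTo_Ioc_of_leftInvOn (hab : a ≤ b) (hF : ContinuousOn F (Icc a b))
    (hFm : StrictMonoOn F (Icc a b)) (hg : LeftInvOn g F (Icc a b)) :
    MapsTo g (Ioc (F a) (F b)) (Ioc a b) := fun x hx => by
  have hg' := strictMonoOn_of_leftInvOn hab hF hFm hg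
  have hx' := Ioc_subset_Icc_self hx
  constructor
  · simpa only [hg (left_mem_Icc.2 hab)] using
      hg' (left_mem_Icc.2 (hx.1.le.trans hx.2)) hx' hx.1
  · simpa only [hg (right_mem_Icc.2 hab)] using
      hg'.monotoneOn hx' (right_mem_Icc.2 (hx.1.le.trans hx.2)) hx.2

theorem continuousAt_of_leftInvOn (hab : a ≤ b) (hF : ContinuousOn F (Icc a b))
    (hFm : StrictMonoOn F (Icc a b)) (hg : LeftInvOn g F (Icc a b)) {x : ℝ}
    (hx : x ∈ Ioo (F a) (F b)) : ContinuousAt g x := by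
  have hgx := mapsTo_Ioo_of_leftInvOn hab hF hFm hg hx
  refine (strictMonoOn_of_leftInvOn hab hF hFm hg).continuousAt_of_image_mem_nhds
    (Icc_mem_nhds hx.1 hx.2) ?_
  rw [image_Icc_of_leftInvOn hab hF hFm.monotoneOn hg]
  exact Icc_mem_nhds hgx.1 hgx.2

theorem tendsto_nhdsGT_of_leftInvOn (hab : a < b) (hF : ContinuousOn F (Icc a b))
    (hFm : StrictMonoOn F (Icc a b)) (hg : LeftInvOn g F (Icc a b)) :
    Tendsto g (𝓝[>] (F a)) (𝓝[>] a) := by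
  have hFab : F a < F b := hFm (left_mem_Icc.2 hab.le) (right_mem_Icc.2 hab.le) hab
  have hga : g (F a) = a := hg (left_mem_Icc.2 hab.le)
  have hcont : ContinuousWithinAt g (Ici (F a)) (F a) := by
    refine (strictMonoOn_of_leftInvOn hab.le hF hFm hg)
      |>.continuousWithinAt_right_of_image_mem_nhdsWithin (Icc_mem_nhdsGE hFab) ?_
    rw [image_Icc_of_leftInvOn hab.le hF hFm.monotoneOn hg, hga]
    exact Icc_mem_nhdsGE hab
  refine tendsto_nhdsWithin_iff.2 ⟨?_, ?_⟩
  · simpa only [hga] using hcont.tendsto.mono_left (nhdsWithin_mono _ Ioi_subset_Ici_self)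
  · filter_upwards [Ioo_mem_nhdsGT hFab] with x hx
    exact (mapsTo_Ioo_of_leftInvOn hab.le hF hFm hg hx).1

theorem tendsto_nhdsLT_of_leftInvOn (hab : a < b) (hF : ContinuousOn F (Icc a b))
    (hFm : StrictMonoOn F (Icc a b)) (hg : LeftInvOn g F (Icc a b)) :
    Tendsto g (𝓝[<] (F b)) (𝓝[<] b) := by
  have hFab : F a < F b := hFm (left_mem_Icc.2 hab.le) (right_mem_Icc.2 hab.le) hab
  have hgb : g (F b) = b := hg (right_mem_Icc.2 hab.le)
  have hcont : ContinuousWithinAt g (Iic (F b)) (F b) := by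
    refine (strictMonoOn_of_leftInvOn hab.le hF hFm hg)
      |>.continuousWithinAt_left_of_image_mem_nhdsWithin (Icc_mem_nhdsLE hFab) ?_
    rw [image_Icc_of_leftInvOn hab.le hF hFm.monotoneOn hg, hgb]
    exact Icc_mem_nhdsLE hab
  refine tendsto_nhdsWithin_iff.2 ⟨?_, ?_⟩
  · simpa only [hgb] using hcont.tendsto.mono_left (nhdsWithin_mono _ Iio_subset_Iic_self)
  · filter_upwards [Ioo_mem_nhdsLT hFab] with x hx
    exact (mapsTo_Ioo_of_leftInvOn hab.le hF hFm hg hx).2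

end LeftInverse

theorem deriv_eq_zero_of_hasDerivWithinAt_Iic {E : Type*} [NormedAddCommGroup E]
    [NormedSpace ℝ E] {f : ℝ → E} {a : ℝ} (h : HasDerivWithinAt f 0 (Iic a) a) :
    deriv f a = 0 := by
  by_cases hd : DifferentiableAt ℝ f a
  · exact (uniqueDiffWithinAt_Iic a).eq_deriv _ hd.hasDerivAt.hasDerivWithinAt h
  · exact deriv_zero_of_not_differentiableAt hd

theorem continuous_one_sub_rpow_rpow {q : ℝ} (hq : 0 ≤ q) :
    Continuous fun s : ℝ => (1 - s ^ q) ^ (1 / q) :=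
  (continuous_const.sub (continuous_rpow_const hq)).rpow_const fun _ => Or.inr (by positivity)

section InverseOfFp

variable {q : ℝ} {sc : ℝ → ℝ}

theorem hasDerivAt_of_leftInvOn_Fp (hq : 1 < q) (hinv₁ : LeftInvOn sc (Fp q) (Icc 0 1))
    (hinv₂ : RightInvOn sc (Fp q) (Icc 0 (Fp q 1))) {x : ℝ} (hx : x ∈ Ioo 0 (Fp q 1)) :
    HasDerivAt sc ((1 - sc x ^ q) ^ (1 / q)) x := by
  have hx' : x ∈ Ioo (Fp q 0) (Fp q 1) := by rwa [Fp_zero]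
  have hsx := mapsTo_Ioo_of_leftInvOn zero_le_one (Fp_continuousOn hq) (Fp_strictMonoOn hq)
    hinv₁ hx'
  rw [← inv_fpIntegrand (rpow_le_one hsx.1.le hsx.2.le (by linarith))]
  refine HasDerivAt.of_local_left_inverse
    (continuousAt_of_leftInvOn zero_le_one (Fp_continuousOn hq) (Fp_strictMonoOn hq) hinv₁ hx')
    (hasDerivAt_Fp hq hsx) (fpIntegrand_pos (by linarith) hsx.1.le hsx.2).ne' ?_
  filter_upwards [Icc_mem_nhds hx.1 hx.2] with y hy using hinv₂ hy

/-- At `x = Fp q 1` both sides are `0`: the left derivative of `sc` there is `0`, and if `sc` is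
not differentiable there, `deriv` takes its junk value `0`. -/
theorem deriv_eq_of_leftInvOn_Fp (hq : 1 < q) (hinv₁ : LeftInvOn sc (Fp q) (Icc 0 1))
    (hinv₂ : RightInvOn sc (Fp q) (Icc 0 (Fp q 1))) {x : ℝ} (hx : x ∈ Ioc 0 (Fp q 1)) :
    deriv sc x = (1 - sc x ^ q) ^ (1 / q) := by
  rcases hx.2.lt_or_eq with hlt | rfl
  · exact (hasDerivAt_of_leftInvOn_Fp hq hinv₁ hinv₂ ⟨hx.1, hlt⟩).deriv
  have hs₁ : sc (Fp q 1) = 1 := hinv₁ (right_mem_Icc.2 zero_le_one)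
  have hsc : Tendsto sc (𝓝[<] Fp q 1) (𝓝 1) :=
    (tendsto_nhdsLT_of_leftInvOn zero_lt_one (Fp_continuousOn hq) (Fp_strictMonoOn hq)
      hinv₁).mono_right nhdsWithin_le_nhds
  have hderiv : EqOn (deriv sc) (fun y => (1 - sc y ^ q) ^ (1 / q)) (Ioo 0 (Fp q 1)) :=
    fun y hy => (hasDerivAt_of_leftInvOn_Fp hq hinv₁ hinv₂ hy).deriv
  rw [hs₁, one_rpow, sub_self, zero_rpow (by positivity)]
  refine deriv_eq_zero_of_hasDerivWithinAt_Iic (hasDerivWithinAt_Iic_of_tendsto_deriv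
    (fun y hy => (hasDerivAt_of_leftInvOn_Fp hq hinv₁ hinv₂ hy).differentiableAt
      |>.differentiableWithinAt) ?_ (Ioo_mem_nhdsLT hx.1) ?_)
  · rw [ContinuousWithinAt, hs₁]
    exact hsc.mono_left (nhdsWithin_mono _ Ioo_subset_Iio_self)
  · have hcos := ((continuous_one_sub_rpow_rpow (q := q) (by linarith)).tendsto 1).comp hsc
    rw [Function.comp_def, one_rpow, sub_self, zero_rpow (by positivity)] at hcos
    exact hcos.congr' (eventuallyEq_of_mem (Ioo_mem_nhdsLT hx.1) hderiv.symm)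

theorem pip_div_two (q : ℝ) : pip q / 2 = Fp q 1 := by
  rw [pip]; ring

theorem pip_pos (hq : 1 < q) : 0 < pip q := by
  have := Fp_strictMonoOn hq (left_mem_Icc.2 zero_le_one) (right_mem_Icc.2 zero_le_one) one_pos
  rw [pip, Fp_zero] at *
  linarith

theorem mapsTo_pip_mul (hq : 1 < q) :
    MapsTo (pip q * ·) (Ioc 0 (1 / 2)) (Ioc (Fp q 0) (Fp q 1)) := fun x hx => by
  rw [Fp_zero, ← pip_div_two, div_eq_mul_one_div]
  exact ⟨mul_pos (pip_pos hq) hx.1, mul_le_mul_of_nonneg_left hx.2 (pip_pos hq).le⟩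

theorem strictMonoOn_comp_pip_mul (hq : 1 < q) (hinv₁ : LeftInvOn sc (Fp q) (Icc 0 1)) :
    StrictMonoOn (fun x => sc (pip q * x)) (Ioc 0 (1 / 2)) :=
  (strictMonoOn_of_leftInvOn zero_le_one (Fp_continuousOn hq) (Fp_strictMonoOn hq) hinv₁).comp
    ((strictMono_mul_left_of_pos (pip_pos hq)).strictMonoOn _)
    ((mapsTo_pip_mul hq).mono_right Ioc_subset_Icc_self)

theorem mapsTo_comp_pip_mul (hq : 1 < q) (hinv₁ : LeftInvOn sc (Fp q) (Icc 0 1)) :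
    MapsTo (fun x => sc (pip q * x)) (Ioc 0 (1 / 2)) (Ioc 0 1) :=
  (mapsTo_Ioc_of_leftInvOn zero_le_one (Fp_continuousOn hq) (Fp_strictMonoOn hq) hinv₁).comp
    (mapsTo_pip_mul hq)

theorem tendsto_comp_pip_mul (hq : 1 < q) (hinv₁ : LeftInvOn sc (Fp q) (Icc 0 1)) :
    Tendsto (fun x => sc (pip q * x)) (𝓝[>] 0) (𝓝[>] 0) := by
  refine (Fp_zero q ▸ tendsto_nhdsGT_of_leftInvOn zero_lt_one (Fp_continuousOn hq)
    (Fp_strictMonoOn hq) hinv₁).comp (tendsto_nhdsWithin_iff.2 ⟨?_, ?_⟩)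
  · simpa using ((continuous_const_mul (pip q)).tendsto 0).mono_left nhdsWithin_le_nhds
  · filter_upwards [self_mem_nhdsWithin] with x hx using mul_pos (pip_pos hq) hx

end InverseOfFp

noncomputable def vProfile (q s : ℝ) : ℝ := (q - 1) * s ^ (q - 2) * (1 - s ^ q) ^ (1 / q)

section VProfile

variable {q : ℝ}

theorem vProfile_one (hq : 0 < q) : vProfile q 1 = 0 := by
  rw [vProfile, one_rpow, one_rpow, sub_self, zero_rpow (by positivity), mul_zero]

theorem vProfile_nonneg (hq : 1 ≤ q) {s : ℝ} (hs : s ∈ Icc (0:ℝ) 1) : 0 ≤ vProfile q s :=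
  mul_nonneg (mul_nonneg (by linarith) (rpow_nonneg hs.1 _))
    (rpow_nonneg (sub_nonneg.2 (rpow_le_one hs.1 hs.2 (by linarith))) _)

theorem vProfile_strictAntiOn (hq₁ : 1 < q) (hq₂ : q ≤ 2) :
    StrictAntiOn (vProfile q) (Ioc 0 1) := by
  intro s hs t ht hst
  have hpow : t ^ (q - 2) ≤ s ^ (q - 2) := rpow_le_rpow_of_nonpos hs.1 hst.le (by linarith)
  have hcos : (1 - t ^ q) ^ (1 / q) < (1 - s ^ q) ^ (1 / q) :=
    rpow_lt_rpow (sub_nonneg.2 (rpow_le_one ht.1.le ht.2 (by linarith)))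
      (sub_lt_sub_left (rpow_lt_rpow hs.1.le hst (by linarith)) 1) (by positivity)
  calc vProfile q t ≤ (q - 1) * s ^ (q - 2) * (1 - t ^ q) ^ (1 / q) :=
        mul_le_mul_of_nonneg_right (mul_le_mul_of_nonneg_left hpow (by linarith))
          (rpow_nonneg (sub_nonneg.2 (rpow_le_one ht.1.le ht.2 (by linarith))) _)
    _ < vProfile q s :=
        mul_lt_mul_of_pos_left hcos (mul_pos (by linarith) (rpow_pos_of_pos hs.1 _))

theorem tendsto_vProfile_atTop (hq₁ : 1 < q) (hq₂ : q < 2) :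
    Tendsto (vProfile q) (𝓝[>] 0) atTop := by
  have hcos : Tendsto (fun s : ℝ => (1 - s ^ q) ^ (1 / q)) (𝓝[>] 0) (𝓝 1) := by
    have h := ((continuous_one_sub_rpow_rpow (by linarith)).tendsto 0).mono_left
      (nhdsWithin_le_nhds (s := Ioi 0))
    rwa [zero_rpow (by linarith), sub_zero, one_rpow] at h
  exact ((tendsto_rpow_neg_nhdsGT_zero (by linarith)).const_mul_atTop
    (by linarith)).atTop_mul_pos one_pos hcos

theorem tendsto_Fp_mul_vProfile (hq : 1 < q) :
    Tendsto (fun s => Fp q s * vProfile q s) (𝓝[>] 0) (𝓝 0) := by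
  have hbound : Tendsto (fun s : ℝ => (q - 1) * s ^ (q - 1)) (𝓝[>] 0) (𝓝 0) := by
    have h := (((continuous_rpow_const (q := q - 1) (by linarith)).tendsto 0).const_mul
      (q - 1)).mono_left (nhdsWithin_le_nhds (s := Ioi (0:ℝ)))
    rwa [zero_rpow (by linarith), mul_zero] at h
  refine squeeze_zero' ?_ ?_ hbound <;>
    filter_upwards [Ioo_mem_nhdsGT zero_lt_one] with s hs
  · exact mul_nonneg ((Fp_zero q).symm.trans_le ((Fp_strictMonoOn hq).monotoneOn
      (left_mem_Icc.2 zero_le_one) (Ioo_subset_Icc_self hs) hs.1.le))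
      (vProfile_nonneg hq.le (Ioo_subset_Icc_self hs))
  · calc Fp q s * vProfile q s ≤ s * fpIntegrand q s * vProfile q s :=
          mul_le_mul_of_nonneg_right (Fp_le_mul_fpIntegrand hq hs.1.le hs.2)
            (vProfile_nonneg hq.le (Ioo_subset_Icc_self hs))
      _ = (q - 1) * s ^ (q - 1) := by
          rw [vProfile, ← inv_fpIntegrand (rpow_le_one hs.1.le hs.2.le (by linarith)),
            show q - 1 = 1 + (q - 2) by ring, rpow_add hs.1, rpow_one]
          field_simp [(fpIntegrand_pos (q := q) (by linarith) hs.1.le hs.2).ne']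

end VProfile

theorem vp_properties (p : ℝ) (hp : 2 < p) (sc : ℝ → ℝ)
    (hinv₁ : ∀ y ∈ Icc (0:ℝ) 1, sc (Fp (p / (p - 1)) y) = y)
    (hinv₂ : ∀ x ∈ Icc (0:ℝ) (pip (p / (p - 1)) / 2), Fp (p / (p - 1)) (sc x) = x)
    (v : ℝ → ℝ)
    (hv : ∀ x, v x = (p / (p - 1) - 1) * sc (pip (p / (p - 1)) * x) ^ (p / (p - 1) - 2) *
      deriv sc (pip (p / (p - 1)) * x)) :
    StrictAntiOn v (Ioc (0:ℝ) (1/2)) ∧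
    Tendsto (fun x => x * v x) (nhdsWithin 0 (Ioi 0)) (nhds 0) ∧
    Tendsto v (nhdsWithin 0 (Ioi 0)) atTop ∧
    v (1/2) = 0 := by
  set q := p / (p - 1) with hq
  have hq₁ : 1 < q := by rw [hq, lt_div_iff₀ (by linarith)]; linarith
  have hq₂ : q < 2 := by rw [hq, div_lt_iff₀ (by linarith)]; linarith
  rw [pip_div_two] at hinv₂
  have hscale : ∀ x ∈ Ioc (0:ℝ) (1 / 2), pip q * x ∈ Ioc 0 (Fp q 1) :=
    fun x hx => Fp_zero q ▸ mapsTo_pip_mul hq₁ hx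
  have hv_eq : EqOn v (vProfile q ∘ fun x => sc (pip q * x)) (Ioc 0 (1 / 2)) := fun x hx => by
    rw [hv, deriv_eq_of_leftInvOn_Fp hq₁ hinv₁ hinv₂ (hscale x hx)]
    rfl
  have hnear : Ioc (0:ℝ) (1 / 2) ∈ 𝓝[>] 0 := Ioc_mem_nhdsGT one_half_pos
  have hlim := tendsto_comp_pip_mul hq₁ hinv₁
  refine ⟨((vProfile_strictAntiOn hq₁ hq₂.le).comp_strictMonoOn
    (strictMonoOn_comp_pip_mul hq₁ hinv₁) (mapsTo_comp_pip_mul hq₁ hinv₁)).congr hv_eq.symm,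
    ?_, ((tendsto_vProfile_atTop hq₁ hq₂).comp hlim).congr' (eventuallyEq_of_mem hnear
    hv_eq.symm), ?_⟩
  · have h := ((tendsto_Fp_mul_vProfile hq₁).comp hlim).div_const (pip q)
    rw [zero_div] at h
    refine h.congr' (eventuallyEq_of_mem hnear fun x hx => ?_)
    simp only [Function.comp_apply, hv_eq hx]
    rw [hinv₂ _ (Ioc_subset_Icc_self (hscale x hx))]
    field_simp [(pip_pos hq₁).ne']
  · rw [hv_eq ⟨one_half_pos, le_rfl⟩, Function.comp_apply, ← div_eq_mul_one_div, pip_div_two,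
      hinv₁ 1 (right_mem_Icc.2 zero_le_one), vProfile_one (by linarith)]
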